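/- Fix a linear order on E. A forest F ⊆ E contains no broken circuit of G if and only if every nontrivial tree component τ of F satisfies μ(τ) = τ, where μ is the minimal-tree partition scheme. Consequently the set of broken-circuit-free forests of G equals the set F^μ_G. -/
import Mathlib

attribute [-instance] Sym2.instPartialOrder


open scoped Classical

namespace BC

variable {V : Type*}

/-- The set of vertices incident to at least one edge of `τ`. -/
noncomputable def supp [Fintype V] (τ : Finset (Sym2 V)) : Finset V :=
  Finset.univ.filter (fun v => ∃ e ∈ τ, v ∈ e)

/-- The graph on vertex set `R` with edge set `F` is connected. -/
def ConnOn (R : Finset V) (F : Finset (Sym2 V)) : Prop :=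
  (SimpleGraph.induce (R : Set V) (SimpleGraph.fromEdgeSet (F : Set (Sym2 V)))).Connected

/-- Edges of `G` with both endpoints in `R` (edge set of the induced subgraph `G|_R`). -/
noncomputable def edgesIn [Fintype V] [DecidableEq V] (G : SimpleGraph V) [DecidableRel G.Adj]
    (R : Finset V) : Finset (Sym2 V) :=
  G.edgeFinset.filter (fun e => ∀ v ∈ e, v ∈ R)

/-- `g` is (the edge set of) a connected spanning subgraph of `G|_R`. -/
def IsCSS [Fintype V] [DecidableEq V] (G : SimpleGraph V) [DecidableRel G.Adj]
    (R : Finset V) (g : Finset (Sym2 V)) : Prop :=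
  g ⊆ edgesIn G R ∧ ConnOn R g

/-- `τ` is (the edge set of) a spanning tree of `G|_R`. -/
def IsSpanningTree [Fintype V] [DecidableEq V] (G : SimpleGraph V) [DecidableRel G.Adj]
    (R : Finset V) (τ : Finset (Sym2 V)) : Prop :=
  IsCSS G R τ ∧ τ.card = R.card - 1

/-- A forest: an edge set containing no cycle. -/
def IsForest (F : Finset (Sym2 V)) : Prop :=
  (SimpleGraph.fromEdgeSet (F : Set (Sym2 V))).IsAcyclic

/-- `τ` is the edge set of a nontrivial tree component of the forest `F`. -/
def IsTreeComponent [Fintype V] (F τ : Finset (Sym2 V)) : Prop :=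
  τ ⊆ F ∧ τ.Nonempty ∧ ConnOn (supp τ) τ ∧ ∀ e ∈ F \ τ, ∀ v ∈ e, v ∉ supp τ

/-- `C` is the edge set of a simple circuit (cycle) of `G`. -/
def IsCircuit (G : SimpleGraph V) (C : Finset (Sym2 V)) : Prop :=
  ∃ (v : V) (w : G.Walk v v), w.IsCycle ∧ w.edges.toFinset = C

/-- `B` is a broken circuit of `G`: a simple circuit minus its maximal edge. -/
def IsBrokenCircuit [LinearOrder (Sym2 V)] (G : SimpleGraph V) (B : Finset (Sym2 V)) : Prop :=
  ∃ C e, IsCircuit G C ∧ e ∈ C ∧ (∀ f ∈ C, f ≤ e) ∧ B = C.erase e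

/-- `m` is a partition scheme in `G`. -/
def IsPartitionScheme [Fintype V] [DecidableEq V] (G : SimpleGraph V) [DecidableRel G.Adj]
    (m : Finset (Sym2 V) → Finset (Sym2 V)) : Prop :=
  ∀ R : Finset V, 2 ≤ R.card → ConnOn R (edgesIn G R) →
    (∀ τ, IsSpanningTree G R τ → τ ⊆ m τ ∧ IsCSS G R (m τ)) ∧
    (∀ g, IsCSS G R g → ∃! τ, IsSpanningTree G R τ ∧ τ ⊆ g ∧ g ⊆ m τ)

/-- The minimal-tree partition scheme: `μ(τ)` adds to `τ` every edge `{x,y}` of `G|_R`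
larger than all the edges on the path in `τ` from `x` to `y`. -/
noncomputable def mu [Fintype V] [DecidableEq V] (G : SimpleGraph V) [DecidableRel G.Adj]
    [LinearOrder (Sym2 V)] (R : Finset V) (τ : Finset (Sym2 V)) : Finset (Sym2 V) :=
  τ ∪ (edgesIn G R).filter (fun e => e ∉ τ ∧ ∀ x y : V, e = s(x, y) →
    ∀ p : (SimpleGraph.fromEdgeSet (τ : Set (Sym2 V))).Walk x y, p.IsPath → ∀ f ∈ p.edges, f < e)

/-- All unordered pairs of distinct elements of `R`. -/
noncomputable def allPairs [DecidableEq V] (R : Finset V) : Finset (Sym2 V) :=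
  ((R ×ˢ R).filter (fun p => p.1 ≠ p.2)).image (fun p => s(p.1, p.2))

/-- `f` takes the same value at the two endpoints of `e`. -/
def eqOn (f : V → ℕ) (e : Sym2 V) : Prop :=
  Sym2.lift ⟨fun x y => f x = f y, fun x y => propext ⟨Eq.symm, Eq.symm⟩⟩ e

lemma mem_supp [Fintype V] {τ : Finset (Sym2 V)} {v : V} :
    v ∈ supp τ ↔ ∃ e ∈ τ, v ∈ e := by simp [supp]

open SimpleGraph in
lemma reachable_induce_of_walk {K : SimpleGraph V} {s : Set V}
    (hs : ∀ a b, K.Adj a b → a ∈ s) {u v : V} (w : K.Walk u v)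
    (hu : u ∈ s) (hv : v ∈ s) : (K.induce s).Reachable ⟨u, hu⟩ ⟨v, hv⟩ := by
  induction w with
  | nil => rfl
  | @cons a b c h w ih =>
    have hb : b ∈ s := hs b a h.symm
    have h1 : (K.induce s).Adj ⟨a, hu⟩ ⟨b, hb⟩ := by simpa using h
    exact h1.reachable.trans (ih hb hv)

open SimpleGraph in
lemma forward [Fintype V] [DecidableEq V] (G : SimpleGraph V)
    [DecidableRel G.Adj] [LinearOrder (Sym2 V)] {F : Finset (Sym2 V)}
    (hF : F ⊆ G.edgeFinset) (hforest : IsForest F)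
    (hnb : ∀ B, IsBrokenCircuit G B → ¬ B ⊆ F)
    {τ : Finset (Sym2 V)} (hτ : IsTreeComponent F τ) : mu G (supp τ) τ = τ := by
  obtain ⟨hτF, _, hconn, _⟩ := hτ
  rw [mu, Finset.union_eq_left]
  intro e he
  exfalso
  rw [Finset.mem_filter] at he
  obtain ⟨heI, heτ, hP⟩ := he
  rw [edgesIn, Finset.mem_filter] at heI
  obtain ⟨heG, hesupp⟩ := heI
  induction e using Sym2.ind with
  | _ x y =>
  have hadj : G.Adj x y := by
    rw [SimpleGraph.mem_edgeFinset, SimpleGraph.mem_edgeSet] at heG; exact heG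
  have hx : x ∈ supp τ := hesupp x (by simp)
  have hy : y ∈ supp τ := hesupp y (by simp)
  -- a path from x to y inside τ
  set K := SimpleGraph.fromEdgeSet (τ : Set (Sym2 V)) with hK
  have hreach : (K.induce ((supp τ : Finset V) : Set V)).Reachable
      ⟨x, by exact_mod_cast hx⟩ ⟨y, by exact_mod_cast hy⟩ := hconn.preconnected _ _
  obtain ⟨w0⟩ := hreach
  have w1 : K.Walk x y := w0.map (SimpleGraph.Embedding.induce _).toHom
  let p := w1.bypass
  have hp : p.IsPath := Walk.bypass_isPath w1
  have hpe : ∀ f ∈ p.edges, f ∈ τ := by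
    intro f hf
    have := Walk.edges_subset_edgeSet p hf
    rw [hK, edgeSet_fromEdgeSet] at this
    exact this.1
  have hlt : ∀ f ∈ p.edges, f < s(x, y) := hP x y rfl p hp
  -- build the cycle in G
  have hpG : ∀ f ∈ p.edges, f ∈ G.edgeSet := by
    intro f hf
    have := hF (hτF (hpe f hf))
    rwa [SimpleGraph.mem_edgeFinset] at this
  let q := p.transfer G hpG
  have hq : q.IsPath := hp.transfer hpG
  have hqe : q.edges = p.edges := Walk.edges_transfer p hpG
  have hne : s(y, x) ∉ q.edges := by
    rw [hqe]
    intro hmem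
    exact heτ (by rw [Sym2.eq_swap] at hmem; exact hpe _ hmem)
  have hcyc : (Walk.cons hadj.symm q).IsCycle :=
    SimpleGraph.Path.cons_isCycle ⟨q, hq⟩ hadj.symm hne
  set C := (Walk.cons hadj.symm q).edges.toFinset with hC
  have hCins : C = insert s(x, y) q.edges.toFinset := by
    rw [hC, Walk.edges_cons, List.toFinset_cons, Sym2.eq_swap]
  have heC : s(x, y) ∈ C := by rw [hCins]; exact Finset.mem_insert_self _ _
  have hmax : ∀ f ∈ C, f ≤ s(x, y) := by
    intro f hf
    rw [hCins, Finset.mem_insert] at hf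
    rcases hf with rfl | hf
    · exact le_refl _
    · exact le_of_lt (hlt f (by rw [← hqe]; exact List.mem_toFinset.mp hf))
  have hBF : C.erase s(x, y) ⊆ F := by
    intro f hf
    rw [Finset.mem_erase, hCins] at hf
    obtain ⟨hfe, hf⟩ := hf
    rcases Finset.mem_insert.mp hf with rfl | hf
    · exact absurd rfl hfe
    · exact hτF (hpe f (by rw [← hqe]; exact List.mem_toFinset.mp hf))
  refine hnb (C.erase s(x, y)) ⟨C, s(x, y), ⟨y, Walk.cons hadj.symm q, hcyc, ?_⟩, heC, hmax, ?_⟩ hBF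
  · ext f; simp [hC]
  · ext f; simp

open SimpleGraph in
lemma backward [Fintype V] [DecidableEq V] (G : SimpleGraph V)
    [DecidableRel G.Adj] [LinearOrder (Sym2 V)] {F : Finset (Sym2 V)}
    (hF : F ⊆ G.edgeFinset) (hforest : IsForest F)
    (hmu : ∀ τ, IsTreeComponent F τ → mu G (supp τ) τ = τ) :
    ∀ B, IsBrokenCircuit G B → ¬ B ⊆ F := by
  rintro B ⟨C, e, ⟨v0, w, hw, hwC⟩, heC, hmax, hBeq⟩ hBF
  set H := SimpleGraph.fromEdgeSet (F : Set (Sym2 V)) with hH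
  have hwe : ∀ f ∈ w.edges, f ∈ C := by
    intro f hf; rw [← hwC]; simpa using hf
  induction e using Sym2.ind with
  | _ x y =>
  have hmemB : ∀ f, f ∈ B ↔ (f ≠ s(x, y) ∧ f ∈ C) := by
    intro f; rw [hBeq]; simp
  have heG : s(x, y) ∈ G.edgeSet := by
    have h1 : s(x, y) ∈ w.edges := by rw [← hwC] at heC; simpa using heC
    exact Walk.edges_subset_edgeSet w h1
  have hGadj : G.Adj x y := by rwa [SimpleGraph.mem_edgeSet] at heG
  have hxy : x ≠ y := hGadj.ne
  -- transfer the cycle to the graph on edge set C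
  set G' := SimpleGraph.fromEdgeSet (C : Set (Sym2 V)) with hG'
  have hwG' : ∀ f ∈ w.edges, f ∈ G'.edgeSet := by
    intro f hf
    rw [hG', edgeSet_fromEdgeSet]
    exact ⟨hwe f hf, SimpleGraph.not_isDiag_of_mem_edgeSet G (Walk.edges_subset_edgeSet w hf)⟩
  have hreachdel : (G' \ SimpleGraph.fromEdgeSet {s(x, y)}).Reachable x y := by
    refine (SimpleGraph.adj_and_reachable_delete_edges_iff_exists_cycle.mpr
      ⟨v0, w.transfer G' hwG', hw.transfer hwG', ?_⟩).2
    rw [Walk.edges_transfer]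
    rw [← hwC] at heC; simpa using heC
  obtain ⟨wd⟩ := hreachdel
  have hwdB : ∀ f ∈ wd.edges, f ∈ B := by
    intro f hf
    have h1 := Walk.edges_subset_edgeSet wd hf
    rw [edgeSet_sdiff, Set.mem_diff, hG', edgeSet_fromEdgeSet, edgeSet_fromEdgeSet] at h1
    obtain ⟨⟨hfC, hfd⟩, hfne⟩ := h1
    rw [hmemB]
    refine ⟨fun hfe => hfne ⟨by simpa using hfe, hfd⟩, hfC⟩
  have hwdH : ∀ f ∈ wd.edges, f ∈ H.edgeSet := by
    intro f hf
    rw [hH, edgeSet_fromEdgeSet]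
    refine ⟨Finset.mem_coe.mpr (hBF (hwdB f hf)), ?_⟩
    have h1 := Walk.edges_subset_edgeSet wd hf
    rw [edgeSet_sdiff, Set.mem_diff, hG', edgeSet_fromEdgeSet] at h1
    exact h1.1.2
  set pB := wd.transfer H hwdH with hpB
  have hpBB : ∀ f ∈ pB.edges, f ∈ B := by
    intro f hf; rw [hpB, Walk.edges_transfer] at hf; exact hwdB f hf
  -- the tree component containing x
  set τ := F.filter (fun f => ∃ v ∈ f, H.Reachable x v) with hτ
  have hτF : τ ⊆ F := Finset.filter_subset _ _
  have hmemτ : ∀ f ∈ F, (∃ v ∈ f, H.Reachable x v) → f ∈ τ := by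
    intro f hf h; rw [hτ, Finset.mem_filter]; exact ⟨hf, h⟩
  have hFne : ∀ f ∈ F, ¬ f.IsDiag := by
    intro f hf
    exact SimpleGraph.not_isDiag_of_mem_edgeSet G (SimpleGraph.mem_edgeFinset.mp (hF hf))
  have hreach_edge : ∀ f ∈ F, ∀ u v : V, u ∈ f → v ∈ f →
      H.Reachable x u → H.Reachable x v := by
    intro f hfF u v hu hv hr
    induction f using Sym2.ind with
    | _ a b =>
    have hab : H.Adj a b := by
      rw [hH, SimpleGraph.fromEdgeSet_adj]
      exact ⟨Finset.mem_coe.mpr hfF, fun h => hFne _ hfF (by simp [h])⟩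
    rw [Sym2.mem_iff] at hu hv
    rcases hu with rfl | rfl <;> rcases hv with rfl | rfl
    · exact hr
    · exact hr.trans hab.reachable
    · exact hr.trans hab.symm.reachable
    · exact hr
  have hsupp_reach : ∀ v ∈ supp τ, H.Reachable x v := by
    intro v hv
    obtain ⟨f, hfτ, hvf⟩ := mem_supp.mp hv
    rw [hτ, Finset.mem_filter] at hfτ
    obtain ⟨hfF, u, huf, hru⟩ := hfτ
    exact hreach_edge f hfF u v huf hvf hru
  have hin_supp : ∀ (f : Sym2 V), f ∈ F → ∀ v ∈ f, H.Reachable x v → v ∈ supp τ := by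
    intro f hf v hvf hr
    exact mem_supp.mpr ⟨f, hmemτ f hf ⟨v, hvf, hr⟩, hvf⟩
  -- edges of walks starting at a vertex reachable from x are in τ
  have hwalkτ : ∀ (a b : V) (wab : H.Walk a b), H.Reachable x a → ∀ f ∈ wab.edges, f ∈ τ := by
    intro a b wab hra f hf
    have hfF : f ∈ F := by
      have := Walk.edges_subset_edgeSet wab hf
      rw [hH, edgeSet_fromEdgeSet] at this
      exact this.1
    induction f using Sym2.ind with
    | _ c d =>
    have hc : c ∈ wab.support := Walk.fst_mem_support_of_mem_edges wab hf
    have hrc : H.Reachable x c := hra.trans ⟨wab.takeUntil c hc⟩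
    exact hmemτ _ hfF ⟨c, by simp, hrc⟩
  have hpBτ : ∀ f ∈ pB.edges, f ∈ τ := hwalkτ x y pB (Reachable.refl x)
  -- x and y are in supp τ, and τ is nonempty
  have hnn : ¬ pB.Nil := Walk.not_nil_of_ne hxy
  have hfirst : s(x, pB.getVert 1) ∈ τ := by
    have hadj : H.Adj x (pB.getVert 1) := Walk.adj_snd hnn
    have hfF : s(x, pB.getVert 1) ∈ F :=
      Finset.mem_coe.mp ((SimpleGraph.fromEdgeSet_adj (F : Set (Sym2 V))).mp hadj).1
    exact hmemτ _ hfF ⟨x, by simp, Reachable.refl x⟩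
  have hxs : x ∈ supp τ := mem_supp.mpr ⟨_, hfirst, by simp⟩
  have hys : y ∈ supp τ := by
    have hnn' : ¬ pB.reverse.Nil := Walk.not_nil_of_ne (Ne.symm hxy)
    have hadj : H.Adj y (pB.reverse.getVert 1) := Walk.adj_snd hnn'
    have hfF : s(y, pB.reverse.getVert 1) ∈ F :=
      Finset.mem_coe.mp ((SimpleGraph.fromEdgeSet_adj (F : Set (Sym2 V))).mp hadj).1
    exact hin_supp _ hfF y (by simp) ⟨pB⟩
  have hτne : τ.Nonempty := ⟨_, hfirst⟩
  -- τ is a tree component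
  set K := SimpleGraph.fromEdgeSet (τ : Set (Sym2 V)) with hK
  have hτH : ∀ f ∈ τ, f ∈ F := fun f hf => hτF hf
  have htc : IsTreeComponent F τ := by
    refine ⟨hτF, hτne, ?_, ?_⟩
    · -- connectivity
      rw [ConnOn, SimpleGraph.connected_iff]
      constructor
      · rintro ⟨u, hu⟩ ⟨v, hv⟩
        have hru : H.Reachable x u := hsupp_reach u (by exact_mod_cast hu)
        have hrv : H.Reachable x v := hsupp_reach v (by exact_mod_cast hv)
        obtain ⟨wu⟩ := hru
        obtain ⟨wv⟩ := hrv
        have hedges : ∀ f ∈ (wu.reverse.append wv).edges, f ∈ K.edgeSet := by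
          intro f hf
          rw [Walk.edges_append] at hf
          have hfτ : f ∈ τ := by
            rcases List.mem_append.mp hf with h | h
            · rw [Walk.edges_reverse] at h
              exact hwalkτ x u wu (Reachable.refl x) f (List.mem_reverse.mp h)
            · exact hwalkτ x v wv (Reachable.refl x) f h
          rw [hK, edgeSet_fromEdgeSet]
          refine ⟨Finset.mem_coe.mpr hfτ, hFne f (hτF hfτ)⟩
        have wK := (wu.reverse.append wv).transfer K hedges
        exact reachable_induce_of_walk
          (fun a b hab => by
            rw [hK, SimpleGraph.fromEdgeSet_adj] at hab
            exact Finset.mem_coe.mpr (mem_supp.mpr ⟨_, Finset.mem_coe.mp hab.1, by simp⟩))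
          wK hu hv
      · exact ⟨⟨x, by exact_mod_cast hxs⟩⟩
    · -- separation
      intro f hf v hvf hvs
      simp only [Finset.mem_sdiff] at hf
      exact hf.2 (hmemτ f hf.1 ⟨v, hvf, hsupp_reach v hvs⟩)
  -- now use hmu to derive a contradiction
  have hsub := Finset.union_eq_left.mp (hmu τ htc)
  have heτ : s(x, y) ∉ τ := by
    intro hmem
    -- then the whole circuit C is inside F, contradicting the forest property
    have heF : s(x, y) ∈ F := hτF hmem
    have hCF : ∀ f ∈ C, f ∈ F := by
      intro f hf
      by_cases hfe : f = s(x, y)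
      · exact hfe ▸ heF
      · exact hBF ((hmemB f).mpr ⟨hfe, hf⟩)
    have hwH : ∀ f ∈ w.edges, f ∈ H.edgeSet := by
      intro f hf
      rw [hH, edgeSet_fromEdgeSet]
      exact ⟨Finset.mem_coe.mpr (hCF f (hwe f hf)),
        SimpleGraph.not_isDiag_of_mem_edgeSet G (Walk.edges_subset_edgeSet w hf)⟩
    exact hforest (w.transfer H hwH) (hw.transfer hwH)
  have hmemfilter : s(x, y) ∈ (edgesIn G (supp τ)).filter (fun e => e ∉ τ ∧ ∀ x' y' : V,
      e = s(x', y') → ∀ p : K.Walk x' y', p.IsPath → ∀ f ∈ p.edges, f < e) := by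
    rw [Finset.mem_filter]
    refine ⟨?_, heτ, ?_⟩
    · rw [edgesIn, Finset.mem_filter]
      refine ⟨SimpleGraph.mem_edgeFinset.mpr heG, ?_⟩
      intro v hv
      rcases Sym2.mem_iff.mp hv with rfl | rfl
      · exact hxs
      · exact hys
    · intro x' y' hxy' p hp f hf
      -- the unique path in the forest from x to y has all its edges in B
      have hpH : ∀ g ∈ p.edges, g ∈ H.edgeSet := by
        intro g hg
        have := Walk.edges_subset_edgeSet p hg
        rw [hK, edgeSet_fromEdgeSet] at this
        rw [hH, edgeSet_fromEdgeSet]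
        exact ⟨Finset.mem_coe.mpr (hτF (Finset.mem_coe.mp this.1)), this.2⟩
      have hPH : (p.transfer H hpH).IsPath := hp.transfer hpH
      set P0 := pB.bypass with hP0
      have hP0path : P0.IsPath := Walk.bypass_isPath pB
      have hP0B : ∀ g ∈ P0.edges, g ∈ B := by
        intro g hg
        exact hpBB g (Walk.edges_bypass_subset pB hg)
      have hfB : f ∈ B := by
        have hunique := SimpleGraph.isAcyclic_iff_path_unique.mp hforest
        rcases Sym2.eq_iff.mp hxy' with ⟨hx1, hy1⟩ | ⟨hx1, hy1⟩
        · subst hx1; subst hy1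
          have := hunique ⟨p.transfer H hpH, hPH⟩ ⟨P0, hP0path⟩
          have hE : (p.transfer H hpH).edges = P0.edges := by
            rw [Subtype.ext_iff] at this
            simp only at this
            rw [this]
          have hf' : f ∈ P0.edges := by
            rw [← hE, Walk.edges_transfer]; exact hf
          exact hP0B f hf'
        · subst hx1; subst hy1
          have := hunique ⟨p.transfer H hpH, hPH⟩ ⟨P0.reverse, hP0path.reverse⟩
          have hE : (p.transfer H hpH).edges = P0.reverse.edges := by
            rw [Subtype.ext_iff] at this
            simp only at this
            rw [this]
          have hf' : f ∈ P0.edges := by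
            have : f ∈ P0.reverse.edges := by
              rw [← hE, Walk.edges_transfer]; exact hf
            rw [Walk.edges_reverse] at this
            exact List.mem_reverse.mp this
          exact hP0B f hf'
      rw [hmemB] at hfB
      exact lt_of_le_of_ne (hmax f hfB.2) hfB.1
  exact heτ (hsub hmemfilter)


/-- A forest is broken-circuit free iff each of its nontrivial tree components is fixed by
the minimal-tree partition scheme; consequently the two families of forests coincide. -/
theorem bcfree_iff_mu_fixed [Fintype V] [DecidableEq V] (G : SimpleGraph V)
    [DecidableRel G.Adj] [LinearOrder (Sym2 V)] :
    (∀ F ⊆ G.edgeFinset, IsForest F →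
      ((∀ B, IsBrokenCircuit G B → ¬ B ⊆ F) ↔
        ∀ τ, IsTreeComponent F τ → mu G (supp τ) τ = τ)) ∧
    G.edgeFinset.powerset.filter
        (fun F => IsForest F ∧ ∀ B, IsBrokenCircuit G B → ¬ B ⊆ F) =
      G.edgeFinset.powerset.filter
        (fun F => IsForest F ∧ ∀ τ, IsTreeComponent F τ → mu G (supp τ) τ = τ) := by
  constructor
  · intro F hF hforest
    exact ⟨fun hnb τ hτ => forward G hF hforest hnb hτ,
      fun hmu => backward G hF hforest hmu⟩
  · ext F
    simp only [Finset.mem_filter, Finset.mem_powerset]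
    constructor
    · rintro ⟨h1, h2, h3⟩
      exact ⟨h1, h2, fun τ hτ => forward G h1 h2 h3 hτ⟩
    · rintro ⟨h1, h2, h3⟩
      exact ⟨h1, h2, backward G h1 h2 h3⟩

end BC
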